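/- Let G be a finite simple graph and let M₁, M₂ be maximum matchings of G. Then in the solution graph 𝒢 on maximal matchings, there exists a directed path from M₁ to M₂ every node of which is a maximal matching of cardinality at least ν(G) − 1. -/

import Mathlib

open SimpleGraph

variable {V : Type*}

def IsMatchingF (G : SimpleGraph V) (M : Finset (Sym2 V)) : Prop :=
  (∀ e ∈ M, e ∈ G.edgeSet) ∧
    ∀ e ∈ M, ∀ f ∈ M, e ≠ f → ∀ v : V, v ∈ e → v ∉ f

def IsMaximalMatchingF [DecidableEq V] (G : SimpleGraph V) (M : Finset (Sym2 V)) : Prop :=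
  IsMatchingF G M ∧ ∀ e ∈ G.edgeSet, e ∉ M → ¬ IsMatchingF G (insert e M)

/-- `v` is unmatched by the matching `M`. -/
def Unmatched (M : Finset (Sym2 V)) (v : V) : Prop := ∀ e ∈ M, v ∉ e

/-- The graph `G[M₁ △ M₂]` on the symmetric difference of two edge sets. -/
def sdGraph [DecidableEq V] (M₁ M₂ : Finset (Sym2 V)) : SimpleGraph V where
  Adj v w := v ≠ w ∧ s(v, w) ∈ (M₁ \ M₂) ∪ (M₂ \ M₁)
  symm := by
    constructor
    intro v w h
    exact ⟨h.1.symm, by rw [Sym2.eq_swap]; exact h.2⟩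
  loopless := ⟨fun v h => h.1 rfl⟩

/-- The walk `p` is a path which is exactly a connected component of `H`
(it spans the component and uses all of its edges, and has at least one edge). -/
def IsPathComponent [DecidableEq V] (H : SimpleGraph V) {u w : V} (p : H.Walk u w) : Prop :=
  p.IsPath ∧ 1 ≤ p.length ∧
    (∀ x : V, x ∈ p.support ↔ H.connectedComponentMk x = H.connectedComponentMk u) ∧
    (∀ a b : V, H.Adj a b → a ∈ p.support → s(a, b) ∈ p.edges)

/-- The closed walk `p` is a cycle which is exactly a connected component of `H`. -/
def IsCycleComponent [DecidableEq V] (H : SimpleGraph V) {u : V} (p : H.Walk u u) : Prop :=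
  p.IsCycle ∧
    (∀ x : V, x ∈ p.support ↔ H.connectedComponentMk x = H.connectedComponentMk u) ∧
    (∀ a b : V, H.Adj a b → a ∈ p.support → s(a, b) ∈ p.edges)

/-- `M` minus all edges sharing an endpoint with `e` (i.e. `M \ Γ(e)` for `e ∉ M`). -/
def removeAdj [Fintype V] [DecidableEq V] (M : Finset (Sym2 V)) (e : Sym2 V) :
    Finset (Sym2 V) :=
  M.filter fun f => ¬ ∃ v : V, v ∈ e ∧ v ∈ f

/-- `comp` greedily extends any matching of `G` to a maximal matching containing it. -/
def CompletionFun [DecidableEq V] (G : SimpleGraph V)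
    (comp : Finset (Sym2 V) → Finset (Sym2 V)) : Prop :=
  ∀ M : Finset (Sym2 V), IsMatchingF G M → M ⊆ comp M ∧ IsMaximalMatchingF G (comp M)

/-- The arcs of the solution graph 𝒢: from `M` to `comp((M \ Γ(e)) ∪ {e})` for `e ∉ M`. -/
def GStep [Fintype V] [DecidableEq V] (G : SimpleGraph V)
    (comp : Finset (Sym2 V) → Finset (Sym2 V)) (M M' : Finset (Sym2 V)) : Prop :=
  ∃ e ∈ G.edgeSet, e ∉ M ∧ M' = comp (insert e (removeAdj M e))

/-- `M` is a maximum (cardinality) matching of `G`. -/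
def IsMaximumMatchingF (G : SimpleGraph V) (M : Finset (Sym2 V)) : Prop :=
  IsMatchingF G M ∧ ∀ N : Finset (Sym2 V), IsMatchingF G N → N.card ≤ M.card

/-! Walk towards `M₂` one edge `e ∈ M₂ \ M` at a time: the step from `M` to
`comp (insert e (removeAdj M e))` keeps every edge of `M₂ ∩ M` (none meets `e`) and gains `e`,
so `M₂ \ M` shrinks. Since `e` meets at most two edges of `M`, a matching of size `≥ ν` stays of
size `≥ ν - 1`. From a matching of size `ν - 1 < |M₂|`, a counting argument on vertices yields an
edge of `M₂ \ M` meeting at most one edge of `M`, so the size does not drop. -/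

section Reconfiguration

variable {G : SimpleGraph V}

namespace IsMatchingF

lemma mono {M N : Finset (Sym2 V)} (hM : IsMatchingF G M) (hNM : N ⊆ M) : IsMatchingF G N :=
  ⟨fun e he => hM.1 e (hNM he), fun e he f hf => hM.2 e (hNM he) f (hNM hf)⟩

lemma card_filter_mem_le_one [DecidableEq V] {M : Finset (Sym2 V)} (hM : IsMatchingF G M)
    (v : V) : (M.filter (v ∈ ·)).card ≤ 1 :=
  Finset.card_le_one.2 fun a ha b hb => by
    by_contra hab
    rw [Finset.mem_filter] at ha hb
    exact hM.2 a ha.1 b hb.1 hab v ha.2 hb.2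

lemma card_biUnion_toFinset [DecidableEq V] {M : Finset (Sym2 V)} (hM : IsMatchingF G M) :
    (M.biUnion Sym2.toFinset).card = 2 * M.card := by
  rw [Finset.card_biUnion, Finset.sum_congr rfl fun e he =>
    Sym2.card_toFinset_of_not_isDiag e (G.not_isDiag_of_mem_edgeSet (hM.1 e he)),
    Finset.sum_const, smul_eq_mul, mul_comm]
  intro e he f hf hef
  rw [Function.onFun, Finset.disjoint_left]
  intro v hve hvf
  exact hM.2 e he f hf hef v (Sym2.mem_toFinset.1 hve) (Sym2.mem_toFinset.1 hvf)

lemma insert_removeAdj [Fintype V] [DecidableEq V] {M : Finset (Sym2 V)} {e : Sym2 V}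
    (hM : IsMatchingF G M) (he : e ∈ G.edgeSet) :
    IsMatchingF G (insert e (removeAdj M e)) := by
  have hsub : removeAdj M e ⊆ M := Finset.filter_subset _ _
  refine ⟨fun f hf => ?_, fun f hf g hg hfg v hvf hvg => ?_⟩
  · rcases Finset.mem_insert.1 hf with rfl | hf
    exacts [he, hM.1 f (hsub hf)]
  rcases Finset.mem_insert.1 hf with rfl | hf <;> rcases Finset.mem_insert.1 hg with rfl | hg
  · exact hfg rfl
  · exact (Finset.mem_filter.1 hg).2 ⟨v, hvf, hvg⟩
  · exact (Finset.mem_filter.1 hf).2 ⟨v, hvg, hvf⟩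
  · exact hM.2 f (hsub hf) g (hsub hg) hfg v hvf hvg

end IsMatchingF

lemma IsMaximumMatchingF.isMaximalMatchingF [DecidableEq V] {M : Finset (Sym2 V)}
    (hM : IsMaximumMatchingF G M) : IsMaximalMatchingF G M := by
  refine ⟨hM.1, fun e _ heM hins => ?_⟩
  have := hM.2 _ hins
  rw [Finset.card_insert_of_notMem heM] at this
  omega

lemma IsMaximalMatchingF.eq_of_subset [DecidableEq V] {M N : Finset (Sym2 V)}
    (hN : IsMaximalMatchingF G N) (hM : IsMatchingF G M) (hNM : N ⊆ M) : M = N := by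
  by_contra hne
  obtain ⟨f, hfM, hfN⟩ := Finset.exists_of_ssubset (hNM.ssubset_of_ne (Ne.symm hne))
  exact hN.2 f (hM.1 f hfM) hfN (hM.mono (Finset.insert_subset hfM hNM))

section Fintype

variable [Fintype V] [DecidableEq V]

def adjEdges (M : Finset (Sym2 V)) (e : Sym2 V) : Finset (Sym2 V) :=
  M.filter fun f => ∃ v : V, v ∈ e ∧ v ∈ f

lemma card_insert_removeAdj_add_card_adjEdges {M : Finset (Sym2 V)} {e : Sym2 V} (heM : e ∉ M) :
    (insert e (removeAdj M e)).card + (adjEdges M e).card = M.card + 1 := by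
  have he : e ∉ removeAdj M e := fun h => heM (Finset.filter_subset _ _ h)
  rw [Finset.card_insert_of_notMem he, add_right_comm, add_comm (removeAdj M e).card, removeAdj,
    adjEdges, Finset.card_filter_add_card_filter_not]

lemma IsMatchingF.card_adjEdges_le_two {M : Finset (Sym2 V)} (hM : IsMatchingF G M)
    (e : Sym2 V) : (adjEdges M e).card ≤ 2 := by
  induction e using Sym2.ind with
  | _ u v =>
    have hsub : adjEdges M s(u, v) ⊆ M.filter (u ∈ ·) ∪ M.filter (v ∈ ·) := by
      intro f hf
      obtain ⟨hfM, w, hw, hwf⟩ := Finset.mem_filter.1 hf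
      rcases Sym2.mem_iff.1 hw with rfl | rfl <;> simp [hfM, hwf]
    calc (adjEdges M s(u, v)).card
        ≤ (M.filter (u ∈ ·) ∪ M.filter (v ∈ ·)).card := Finset.card_le_card hsub
      _ ≤ 1 + 1 := (Finset.card_union_le _ _).trans
          (add_le_add (hM.card_filter_mem_le_one u) (hM.card_filter_mem_le_one v))

lemma IsMatchingF.card_adjEdges_le_one_of_unmatched {M : Finset (Sym2 V)}
    (hM : IsMatchingF G M) {u : V} (hu : Unmatched M u) (v : V) :
    (adjEdges M s(u, v)).card ≤ 1 := by
  refine (Finset.card_le_card fun f hf => ?_).trans (hM.card_filter_mem_le_one v)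
  obtain ⟨hfM, w, hw, hwf⟩ := Finset.mem_filter.1 hf
  rcases Sym2.mem_iff.1 hw with rfl | rfl
  · exact absurd hwf (hu f hfM)
  · exact Finset.mem_filter.2 ⟨hfM, hwf⟩

lemma exists_mem_sdiff_mem_of_one_lt_card_adjEdges {M N : Finset (Sym2 V)}
    (hM : IsMatchingF G M) (hN : IsMatchingF G N) {e : Sym2 V} (he : e ∈ N \ M)
    (hadj : 1 < (adjEdges M e).card) {x : V} (hx : x ∈ e) : ∃ f ∈ M \ N, x ∈ f := by
  obtain ⟨heN, heM⟩ := Finset.mem_sdiff.1 he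
  obtain ⟨y, rfl⟩ := Sym2.mem_iff_exists.1 hx
  have hx : ¬ Unmatched M x := fun hx => (hM.card_adjEdges_le_one_of_unmatched hx y).not_gt hadj
  simp only [Unmatched, not_forall, not_not] at hx
  obtain ⟨f, hfM, hxf⟩ := hx
  refine ⟨f, Finset.mem_sdiff.2 ⟨hfM, fun hfN => ?_⟩, hxf⟩
  exact hN.2 f hfN _ heN (fun h => heM (h ▸ hfM)) x hxf (Sym2.mem_mk_left x y)

lemma exists_mem_sdiff_card_adjEdges_le_one {M N : Finset (Sym2 V)} (hM : IsMatchingF G M)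
    (hN : IsMatchingF G N) (hlt : M.card < N.card) :
    ∃ e ∈ N \ M, (adjEdges M e).card ≤ 1 := by
  by_contra! hheavy
  -- Otherwise `M \ N` covers all `2 * |N \ M|` vertices of `N \ M`.
  have hsub : (N \ M).biUnion Sym2.toFinset ⊆ (M \ N).biUnion Sym2.toFinset := by
    intro x hx
    obtain ⟨e, he, hxe⟩ := Finset.mem_biUnion.1 hx
    obtain ⟨f, hf, hxf⟩ := exists_mem_sdiff_mem_of_one_lt_card_adjEdges hM hN he (hheavy e he)
      (Sym2.mem_toFinset.1 hxe)
    exact Finset.mem_biUnion.2 ⟨f, hf, Sym2.mem_toFinset.2 hxf⟩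
  have hle := Finset.card_le_card hsub
  rw [(hN.mono Finset.sdiff_subset).card_biUnion_toFinset,
    (hM.mono Finset.sdiff_subset).card_biUnion_toFinset] at hle
  have hNM := Finset.card_sdiff_add_card_inter N M
  have hMN := Finset.card_sdiff_add_card_inter M N
  rw [Finset.inter_comm] at hMN
  omega

lemma exists_mem_sdiff_le_card_insert_removeAdj {M N : Finset (Sym2 V)} {k : ℕ}
    (hM : IsMatchingF G M) (hN : IsMatchingF G N) (hkN : k ≤ N.card) (hkM : k - 1 ≤ M.card)
    (hNM : ¬ N ⊆ M) : ∃ e ∈ N \ M, k - 1 ≤ (insert e (removeAdj M e)).card := by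
  by_cases hMk : k ≤ M.card
  · obtain ⟨e, he⟩ := Finset.sdiff_nonempty.2 hNM
    have := card_insert_removeAdj_add_card_adjEdges (Finset.mem_sdiff.1 he).2
    have := hM.card_adjEdges_le_two e
    exact ⟨e, he, by omega⟩
  · obtain ⟨e, he, hlight⟩ := exists_mem_sdiff_card_adjEdges_le_one hM hN (by omega)
    have := card_insert_removeAdj_add_card_adjEdges (Finset.mem_sdiff.1 he).2
    exact ⟨e, he, by omega⟩

lemma card_sdiff_lt_of_insert_removeAdj_subset {M N B : Finset (Sym2 V)} {e : Sym2 V}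
    (hN : IsMatchingF G N) (he : e ∈ N \ M) (hB : insert e (removeAdj M e) ⊆ B) :
    (N \ B).card < (N \ M).card := by
  obtain ⟨heN, heM⟩ := Finset.mem_sdiff.1 he
  refine Finset.card_lt_card ⟨fun f hf => ?_, fun h => ?_⟩
  · obtain ⟨hfN, hfB⟩ := Finset.mem_sdiff.1 hf
    refine Finset.mem_sdiff.2 ⟨hfN, fun hfM => hfB (hB (Finset.mem_insert_of_mem ?_))⟩
    refine Finset.mem_filter.2 ⟨hfM, fun ⟨v, hve, hvf⟩ => ?_⟩
    exact hN.2 e heN f hfN (fun h => heM (h ▸ hfM)) v hve hvf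
  · exact (Finset.mem_sdiff.1 (h he)).2 (hB (Finset.mem_insert_self e _))

end Fintype

theorem reflTransGen_gStep_of_le_card [Fintype V] [DecidableEq V]
    {comp : Finset (Sym2 V) → Finset (Sym2 V)} (hcomp : CompletionFun G comp)
    {M₂ : Finset (Sym2 V)} (hM₂ : IsMaximalMatchingF G M₂) {k : ℕ} (hk : k ≤ M₂.card)
    {M : Finset (Sym2 V)} (hM : IsMatchingF G M) (hkM : k - 1 ≤ M.card) :
    Relation.ReflTransGen
      (fun A B => GStep G comp A B ∧ IsMaximalMatchingF G B ∧ k - 1 ≤ B.card) M M₂ := by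
  by_cases hsub : M₂ ⊆ M
  · rw [hM₂.eq_of_subset hM hsub]
  obtain ⟨e, he, hkN⟩ := exists_mem_sdiff_le_card_insert_removeAdj hM hM₂.1 hk hkM hsub
  have heG : e ∈ G.edgeSet := hM₂.1.1 e (Finset.mem_sdiff.1 he).1
  obtain ⟨hNB, hB⟩ := hcomp _ (hM.insert_removeAdj heG)
  have hkB := hkN.trans (Finset.card_le_card hNB)
  have hdecreasing := card_sdiff_lt_of_insert_removeAdj_subset hM₂.1 he hNB
  exact .head ⟨⟨e, heG, (Finset.mem_sdiff.1 he).2, rfl⟩, hB, hkB⟩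
    (reflTransGen_gStep_of_le_card hcomp hM₂ hk hB.1 hkB)
termination_by (M₂ \ M).card

end Reconfiguration

theorem stmt15 [Fintype V] [DecidableEq V] (G : SimpleGraph V)
    (comp : Finset (Sym2 V) → Finset (Sym2 V)) (hcomp : CompletionFun G comp)
    (M₁ M₂ : Finset (Sym2 V))
    (h₁ : IsMaximumMatchingF G M₁) (h₂ : IsMaximumMatchingF G M₂) :
    Relation.ReflTransGen
      (fun A B => GStep G comp A B ∧ IsMaximalMatchingF G B ∧ M₁.card - 1 ≤ B.card)
      M₁ M₂ :=
  reflTransGen_gStep_of_le_card hcomp h₂.isMaximalMatchingF (h₂.2 M₁ h₁.1) h₁.1 (Nat.sub_le _ _)
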